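/- If g is holomorphic on the unit disk with g(0)=0, g'(0)=1, and z g'(z)/g(z) is subordinate to a biholomorphic Φ with Φ(0)=1, Re Φ > 0, then writing g(z) = z + b₂z² + ⋯, |b₂| ≤ |Φ'(0)|. -/

import Mathlib

open Complex Metric Set Filter
open scoped Topology

private lemma myAnalyticAt_deriv {f : ℂ → ℂ} {x : ℂ} (h : AnalyticAt ℂ f x) :
    AnalyticAt ℂ (deriv f) x := by
  have h' : AnalyticOnNhd ℂ f {x} := fun y hy => by rw [mem_singleton_iff] at hy; rwa [hy]
  exact h'.deriv x rfl

private lemma myAnalyticAt_hasStrictDerivAt {f : ℂ → ℂ} {x : ℂ} (h : AnalyticAt ℂ f x) :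
    HasStrictDerivAt f (deriv f x) x := by
  obtain ⟨p, hp⟩ := h
  rw [hp.deriv]
  exact hp.hasStrictDerivAt

private lemma nat_mul_div_cancel {a : ℂ} {n : ℕ} (h : (n : ℂ) ≠ 0) : (n : ℂ) * (a / n) = a := by
  rw [mul_comm, div_mul_cancel₀ _ h]

private lemma exists_nthroot {n : ℕ} (hn : 0 < n) {q : ℂ → ℂ} {w : ℂ}
    (hq : AnalyticAt ℂ q w) (h0 : q w ≠ 0) :
    ∃ ρ : ℂ → ℂ, AnalyticAt ℂ ρ w ∧ ρ w ≠ 0 ∧ ∀ᶠ z in 𝓝 w, ρ z ^ n = q z := by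
  have hnC : (n : ℂ) ≠ 0 := Nat.cast_ne_zero.mpr hn.ne'
  set c : ℂ := Complex.exp (Complex.log (q w) / n) with hc
  have hcn : c ^ n = q w := by
    rw [hc, ← Complex.exp_nat_mul]
    have e0 : (n : ℂ) * (Complex.log (q w) / n) = Complex.log (q w) := nat_mul_div_cancel hnC
    rw [e0, Complex.exp_log h0]
  refine ⟨fun z => c * Complex.exp (Complex.log (q z / q w) / n), ?_, ?_, ?_⟩
  · refine analyticAt_const.mul (analyticAt_cexp.comp ?_)
    refine AnalyticAt.div ?_ analyticAt_const hnC
    refine (analyticAt_clog ?_).comp (hq.div analyticAt_const h0)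
    rw [div_self h0]
    exact Complex.one_mem_slitPlane
  · simp only [div_self h0, Complex.log_one, zero_div, Complex.exp_zero, mul_one]
    exact Complex.exp_ne_zero _
  · filter_upwards [hq.continuousAt.eventually_ne h0] with z hz
    rw [mul_pow, hcn, ← Complex.exp_nat_mul]
    have e1 : (n : ℂ) * (Complex.log (q z / q w) / n) = Complex.log (q z / q w) :=
      nat_mul_div_cancel hnC
    rw [e1, Complex.exp_log (div_ne_zero hz h0)]
    field_simp

private lemma deriv_ne_zero_of_injOn {f : ℂ → ℂ} {s : Set ℂ} {w : ℂ}
    (hs : s ∈ 𝓝 w) (hf : AnalyticAt ℂ f w) (hinj : Set.InjOn f s) :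
    deriv f w ≠ 0 := by
  intro hd0
  have hws : w ∈ s := mem_of_mem_nhds hs
  have hs' : ∀ᶠ z in 𝓝 w, z ∈ s := hs
  set F : ℂ → ℂ := fun z => f z - f w with hFdef
  have hFa : AnalyticAt ℂ F w := hf.sub analyticAt_const
  have hne : ¬ ∀ᶠ z in 𝓝 w, F z = 0 := by
    intro h
    have h8 : ∀ᶠ z in 𝓝[≠] w, (z ∈ s ∧ F z = 0) ∧ z ≠ w :=
      ((hs'.and h).filter_mono nhdsWithin_le_nhds).and eventually_mem_nhdsWithin
    obtain ⟨z, ⟨hzs, hz0⟩, hzw⟩ := h8.exists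
    exact hzw (hinj hzs hws (sub_eq_zero.mp hz0))
  have hot : analyticOrderAt F w ≠ ⊤ := fun h => hne (analyticOrderAt_eq_top.mp h)
  obtain ⟨n, hn⟩ := WithTop.ne_top_iff_exists.mp hot
  obtain ⟨q, hq, hq0, heq⟩ := (hFa.analyticOrderAt_eq_natCast (n := n)).mp (by exact_mod_cast hn.symm)
  simp only [smul_eq_mul] at heq
  have hn0 : n ≠ 0 := by
    intro h
    have h2 := heq.self_of_nhds
    simp only [hFdef, h, pow_zero, one_mul, sub_self] at h2
    exact hq0 h2.symm
  have hn1 : n ≠ 1 := by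
    intro h
    have hdF : deriv F w = deriv f w := by
      simp only [hFdef, deriv_sub_const]
    have h2 : HasDerivAt (fun z => (z - w) ^ n * q z)
        ((((n : ℂ) * (w - w) ^ (n - 1) * 1)) * q w + (w - w) ^ n * deriv q w) w :=
      (((hasDerivAt_id w).sub_const w).pow n).mul hq.differentiableAt.hasDerivAt
    have heq' : F =ᶠ[𝓝 w] fun z => (z - w) ^ n * q z := heq
    have h3 : deriv F w = (((n : ℂ) * (w - w) ^ (n - 1) * 1)) * q w + (w - w) ^ n * deriv q w :=
      heq'.deriv_eq.trans h2.deriv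
    rw [hdF, hd0, h] at h3
    simp at h3
    exact hq0 h3.symm
  have hn2 : 2 ≤ n := by omega
  obtain ⟨ρ, hρ, hρ0, hρn⟩ := exists_nthroot (Nat.pos_of_ne_zero hn0) hq hq0
  set ζ : ℂ → ℂ := fun z => (z - w) * ρ z with hζdef
  have hζw : ζ w = 0 := by simp [hζdef]
  have hζs : HasStrictDerivAt ζ (ρ w) w := by
    have h1 : HasStrictDerivAt (fun z : ℂ => z - w) 1 w := (hasStrictDerivAt_id w).sub_const w
    have h2 : HasStrictDerivAt ζ (1 * ρ w + (w - w) * deriv ρ w) w :=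
      HasStrictDerivAt.mul h1 (myAnalyticAt_hasStrictDerivAt hρ)
    simpa using h2
  have hζF : ∀ᶠ z in 𝓝 w, ζ z ^ n = F z := by
    filter_upwards [hρn, heq] with z h1 h2
    simp only [hζdef, mul_pow, h1, ← h2]
  set hfd := hζs.hasStrictFDerivAt_equiv hρ0 with hfddef
  set l := hfd.localInverse _ _ _ with hldef
  have hl0 : l 0 = w := by
    have h2 := hfd.localInverse_apply_image
    rwa [hζw] at h2
  have hlc : ContinuousAt l 0 := by
    have h2 := hfd.localInverse_continuousAt
    rwa [hζw] at h2
  have hri : ∀ᶠ y in 𝓝 (0 : ℂ), ζ (l y) = y := by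
    have h2 := hfd.eventually_right_inverse
    rwa [hζw] at h2
  have hlP : ∀ᶠ y in 𝓝 (0 : ℂ), l y ∈ s ∧ ζ (l y) ^ n = F (l y) := by
    have ht : Filter.Tendsto l (𝓝 0) (𝓝 w) := by
      have h2 := hlc.tendsto
      rwa [hl0] at h2
    exact ht.eventually (hs'.and hζF)
  set ε : ℂ := Complex.exp (2 * Real.pi * I / n) with hε
  have hεn : ε ^ n = 1 := by
    rw [hε, ← Complex.exp_nat_mul]
    have e2 : (n : ℂ) * (2 * Real.pi * I / n) = 2 * Real.pi * I :=
      nat_mul_div_cancel (Nat.cast_ne_zero.mpr hn0)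
    rw [e2, Complex.exp_two_pi_mul_I]
  have hε1 : ε ≠ 1 := by
    intro h1eq
    rw [hε, Complex.exp_eq_one_iff] at h1eq
    obtain ⟨m, hm⟩ := h1eq
    have h2pi : (2 * (Real.pi : ℂ) * I) ≠ 0 := by
      simp [Real.pi_ne_zero, Complex.I_ne_zero]
    have key : ((m : ℂ) * n) * (2 * Real.pi * I) = 1 * (2 * Real.pi * I) := by
      have h3 := congrArg (fun x : ℂ => x * n) hm
      rw [div_mul_cancel₀ _ (Nat.cast_ne_zero.mpr hn0 : (n:ℂ) ≠ 0)] at h3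
      linear_combination -h3
    have h4 : (m : ℂ) * n = 1 := mul_right_cancel₀ h2pi key
    have h5 : (m * (n : ℤ) : ℤ) = 1 := by exact_mod_cast h4
    have h6 : (n : ℤ) ∣ 1 := Dvd.intro_left m h5
    have h7 := Int.le_of_dvd one_pos h6
    omega
  have hεabs : ‖ε‖ = 1 := by
    rw [hε, Complex.norm_exp]
    have h2 : (2 * (Real.pi : ℂ) * I / n).re = 0 := by
      simp [Complex.div_re]
    rw [h2, Real.exp_zero]
  obtain ⟨δ, hδ, hδsub⟩ := Metric.eventually_nhds_iff.mp (hri.and hlP)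
  set t : ℂ := ((δ / 2 : ℝ) : ℂ) with htdef
  have ht0 : t ≠ 0 := by
    rw [htdef]
    exact_mod_cast (by positivity : (δ / 2 : ℝ) ≠ 0)
  have htd : dist t 0 < δ := by
    rw [dist_zero_right, htdef]
    rw [Complex.norm_real, Real.norm_eq_abs, abs_of_pos (by positivity)]
    linarith
  have htd' : dist (t * ε) 0 < δ := by
    rw [dist_zero_right, norm_mul]
    rw [hεabs, mul_one]
    rw [← dist_zero_right]
    exact htd
  obtain ⟨hri1, hs1, hF1⟩ := hδsub htd
  obtain ⟨hri2, hs2, hF2⟩ := hδsub htd'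
  have hFeq : F (l t) = F (l (t * ε)) := by
    rw [← hF1, ← hF2, hri1, hri2, mul_pow, hεn, mul_one]
  have hfeq : f (l t) = f (l (t * ε)) := by
    have h2 : f (l t) - f w = f (l (t * ε)) - f w := hFeq
    exact sub_left_inj.mp h2
  have hll : l t = l (t * ε) := hinj hs1 hs2 hfeq
  have h9 : ζ (l t) = ζ (l (t * ε)) := by rw [hll]
  rw [hri1, hri2] at h9
  have h10 : t * 1 = t * ε := by rw [mul_one]; exact h9
  exact hε1 (mul_left_cancel₀ ht0 h10).symm

theorem second_coefficient_bound (Φ g : ℂ → ℂ)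
    (hΦ : DifferentiableOn ℂ Φ (ball (0:ℂ) 1))
    (hΦinj : Set.InjOn Φ (ball (0:ℂ) 1))
    (hΦ0 : Φ 0 = 1)
    (hΦre : ∀ z ∈ ball (0:ℂ) 1, 0 < (Φ z).re)
    (hg : DifferentiableOn ℂ g (ball (0:ℂ) 1))
    (h0 : g 0 = 0) (h1 : deriv g 0 = 1)
    (hsub : ∀ z ∈ ball (0:ℂ) 1, z ≠ 0 → z * deriv g z / g z ∈ Φ '' (ball (0:ℂ) 1)) :
    ‖iteratedDeriv 2 g 0 / 2‖ ≤ ‖deriv Φ 0‖ := by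
  have hball : IsOpen (ball (0:ℂ) 1) := isOpen_ball
  have h0mem : (0:ℂ) ∈ ball (0:ℂ) 1 := mem_ball_self one_pos
  have hΦan : AnalyticOnNhd ℂ Φ (ball 0 1) := hΦ.analyticOnNhd hball
  have hgan : AnalyticOnNhd ℂ g (ball 0 1) := hg.analyticOnNhd hball
  have hΦd : ∀ w ∈ ball (0:ℂ) 1, deriv Φ w ≠ 0 := fun w hw =>
    deriv_ne_zero_of_injOn (hball.mem_nhds hw) (hΦan w hw) hΦinj
  -- g does not vanish away from 0
  have gnz : ∀ z ∈ ball (0:ℂ) 1, z ≠ 0 → g z ≠ 0 := by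
    intro z hz hz0 hgz
    obtain ⟨u, hu, huΦ⟩ := hsub z hz hz0
    rw [hgz, div_zero] at huΦ
    have h2 := hΦre u hu
    rw [huΦ] at h2
    simp at h2
  set k : ℂ → ℂ := dslope g 0 with hk
  have hk0 : k 0 = 1 := by rw [hk, dslope_same, h1]
  have kval : ∀ z : ℂ, z ≠ 0 → k z = g z / z := by
    intro z hz
    rw [hk, dslope_of_ne _ hz, slope_def_field, h0, sub_zero, sub_zero]
  have hkan : AnalyticAt ℂ k 0 := by
    obtain ⟨p, hp⟩ := hgan 0 h0mem
    exact ⟨_, hp.has_fpower_series_dslope_fslope⟩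
  have hkdAt : ∀ z ∈ ball (0:ℂ) 1, DifferentiableAt ℂ k z := by
    intro z hz
    rcases eq_or_ne z 0 with rfl | hz0
    · exact hkan.differentiableAt
    · exact (differentiableAt_dslope_of_ne hz0).mpr
        ((hg z hz).differentiableAt (hball.mem_nhds hz))
  have knz : ∀ z ∈ ball (0:ℂ) 1, k z ≠ 0 := by
    intro z hz
    rcases eq_or_ne z 0 with rfl | hz0
    · rw [hk0]; exact one_ne_zero
    · rw [kval z hz0]; exact div_ne_zero (gnz z hz hz0) hz0
  set H : ℂ → ℂ := fun z => deriv g z / k z with hH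
  have hdgan : AnalyticOnNhd ℂ (deriv g) (ball 0 1) := hgan.deriv
  have hHat : ∀ z ∈ ball (0:ℂ) 1, DifferentiableAt ℂ H z := fun z hz =>
    ((hdgan z hz).differentiableAt).div (hkdAt z hz) (knz z hz)
  have hHd : DifferentiableOn ℂ H (ball 0 1) := fun z hz =>
    (hHat z hz).differentiableWithinAt
  have H0 : H 0 = 1 := by rw [hH]; simp only; rw [hk0, h1, div_one]
  have Hval : ∀ z ∈ ball (0:ℂ) 1, z ≠ 0 → H z = z * deriv g z / g z := by
    intro z hz hz0
    have hgnz := gnz z hz hz0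
    rw [hH]; simp only
    rw [kval z hz0]
    field_simp
  have Hmem : ∀ z ∈ ball (0:ℂ) 1, H z ∈ Φ '' (ball 0 1) := by
    intro z hz
    rcases eq_or_ne z 0 with rfl | hz0
    · exact ⟨0, h0mem, by rw [hΦ0, H0]⟩
    · rw [Hval z hz hz0]; exact hsub z hz hz0
  set Ψ : ℂ → ℂ := Function.invFunOn Φ (ball 0 1) with hΨ
  have hΨleft : ∀ z ∈ ball (0:ℂ) 1, Ψ (Φ z) = z := fun z hz =>
    hΦinj.leftInvOn_invFunOn hz
  have hΨmem : ∀ y ∈ Φ '' (ball (0:ℂ) 1), Ψ y ∈ ball (0:ℂ) 1 := by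
    rintro y ⟨z, hz, rfl⟩
    exact Function.invFunOn_mem ⟨z, hz, rfl⟩
  have hΨright : ∀ y ∈ Φ '' (ball (0:ℂ) 1), Φ (Ψ y) = y := by
    rintro y ⟨z, hz, rfl⟩
    exact Function.invFunOn_eq ⟨z, hz, rfl⟩
  set ω : ℂ → ℂ := fun z => Ψ (H z) with hω
  have ωmaps : MapsTo ω (ball (0:ℂ) 1) (ball (0:ℂ) 1) := fun z hz => hΨmem _ (Hmem z hz)
  have ω0 : ω 0 = 0 := by
    rw [hω]; simp only; rw [H0, ← hΦ0, hΨleft 0 h0mem]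
  have Φω : ∀ z ∈ ball (0:ℂ) 1, Φ (ω z) = H z := fun z hz => hΨright _ (Hmem z hz)
  -- ω is holomorphic
  have ωdiffAt : ∀ z₁ ∈ ball (0:ℂ) 1, DifferentiableAt ℂ ω z₁ := by
    intro z₁ hz₁
    have hw : ω z₁ ∈ ball (0:ℂ) 1 := ωmaps hz₁
    have hΦs : HasStrictDerivAt Φ (deriv Φ (ω z₁)) (ω z₁) :=
      myAnalyticAt_hasStrictDerivAt (hΦan _ hw)
    have hΦd' := hΦd _ hw
    set hfd := hΦs.hasStrictFDerivAt_equiv hΦd' with hfddef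
    set l := hfd.localInverse _ _ _ with hldef
    have hlΦw : l (Φ (ω z₁)) = ω z₁ := hfd.localInverse_apply_image
    have hldiff : DifferentiableAt ℂ l (Φ (ω z₁)) := by
      have h2 := hfd.to_localInverse
      exact h2.differentiableAt
    have hlc : ContinuousAt l (Φ (ω z₁)) := hfd.localInverse_continuousAt
    have hri : ∀ᶠ y in 𝓝 (Φ (ω z₁)), Φ (l y) = y := hfd.eventually_right_inverse
    have hHz₁ : H z₁ = Φ (ω z₁) := (Φω z₁ hz₁).symm
    have t1 : Filter.Tendsto H (𝓝 z₁) (𝓝 (Φ (ω z₁))) := by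
      rw [← hHz₁]
      exact (hHat z₁ hz₁).continuousAt
    have hev : ∀ᶠ z in 𝓝 z₁, ω z = l (H z) := by
      have e1 : ∀ᶠ z in 𝓝 z₁, Φ (l (H z)) = H z := t1.eventually hri
      have e2 : ∀ᶠ z in 𝓝 z₁, l (H z) ∈ ball (0:ℂ) 1 := by
        have t2 : Filter.Tendsto (fun z => l (H z)) (𝓝 z₁) (𝓝 (ω z₁)) := by
          have t3 := hlc.tendsto
          rw [hlΦw] at t3
          exact t3.comp t1
        exact t2.eventually (hball.eventually_mem hw)
      have e3 : ∀ᶠ z in 𝓝 z₁, z ∈ ball (0:ℂ) 1 := hball.mem_nhds hz₁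
      filter_upwards [e1, e2, e3] with z hh1 hh2 hh3
      exact hΦinj (ωmaps hh3) hh2 (by rw [Φω z hh3, hh1])
    have hld : DifferentiableAt ℂ (fun z => l (H z)) z₁ := by
      have := DifferentiableAt.comp z₁ (hHz₁ ▸ hldiff) (hHat z₁ hz₁)
      exact this
    exact (Filter.EventuallyEq.differentiableAt_iff hev).mpr hld
  have ωdiff : DifferentiableOn ℂ ω (ball (0:ℂ) 1) := fun z hz =>
    (ωdiffAt z hz).differentiableWithinAt
  -- Schwarz lemma
  have hSch : ‖deriv ω 0‖ ≤ 1 :=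
    Complex.norm_deriv_le_one_of_mapsTo_ball ωdiff
      (fun z hz => by rw [ω0]; exact ball_subset_closedBall (ωmaps hz)) one_pos
  -- chain rule
  have hcomp : deriv H 0 = deriv Φ 0 * deriv ω 0 := by
    have he : H =ᶠ[𝓝 0] (Φ ∘ ω) := by
      filter_upwards [hball.mem_nhds h0mem] with z hz
      exact (Φω z hz).symm
    rw [he.deriv_eq, deriv_comp (x := 0) (h₂ := Φ) (by rw [ω0]; exact (hΦan 0 h0mem).differentiableAt)
      (ωdiffAt 0 h0mem), ω0]
  -- compute deriv H 0 = deriv k 0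
  have gzk : ∀ z : ℂ, g z = z * k z := by
    intro z
    rcases eq_or_ne z 0 with rfl | hz0
    · simp [h0]
    · rw [kval z hz0, mul_div_cancel₀ _ hz0]
  have hkanD : AnalyticAt ℂ (deriv k) 0 := myAnalyticAt_deriv hkan
  have hdg : ∀ᶠ z in 𝓝 0, deriv g z = k z + z * deriv k z := by
    filter_upwards [hball.mem_nhds h0mem] with z hz
    have h2 : HasDerivAt (fun y => y * k y) (1 * k z + z * deriv k z) z :=
      HasDerivAt.mul (hasDerivAt_id z) (hkdAt z hz).hasDerivAt
    have h3 : g = fun y => y * k y := funext gzk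
    rw [h3, h2.deriv]
    ring
  have hdd : deriv (deriv g) 0 = 2 * deriv k 0 := by
    rw [Filter.EventuallyEq.deriv_eq hdg]
    have h2 : HasDerivAt (fun z : ℂ => k z + z * deriv k z)
        (deriv k 0 + (1 * deriv k 0 + 0 * deriv (deriv k) 0)) 0 :=
      HasDerivAt.add (hkan.differentiableAt.hasDerivAt)
        (HasDerivAt.mul (hasDerivAt_id 0) hkanD.differentiableAt.hasDerivAt)
    rw [h2.deriv]
    ring
  have hdH0 : deriv H 0 = deriv k 0 := by
    have hD : HasDerivAt H
        ((deriv (deriv g) 0 * k 0 - deriv g 0 * deriv k 0) / k 0 ^ 2) 0 :=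
      HasDerivAt.div ((hdgan 0 h0mem).differentiableAt.hasDerivAt)
        (hkan.differentiableAt.hasDerivAt) (by rw [hk0]; exact one_ne_zero)
    rw [hD.deriv, hdd, hk0, h1]
    ring
  have hit : iteratedDeriv 2 g 0 = 2 * deriv k 0 := by
    have h2 : iteratedDeriv 2 g = deriv (deriv g) := by
      rw [show (2:ℕ) = 1 + 1 from rfl, iteratedDeriv_succ, iteratedDeriv_one]
    rw [h2, hdd]
  rw [hit]
  have h3 : (2 : ℂ) * deriv k 0 / 2 = deriv k 0 := by ring
  rw [h3, ← hdH0, hcomp, norm_mul]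
  calc ‖deriv Φ 0‖ * ‖deriv ω 0‖
      ≤ ‖deriv Φ 0‖ * 1 :=
        mul_le_mul_of_nonneg_left hSch (norm_nonneg _)
    _ = ‖deriv Φ 0‖ := mul_one _
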